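/- arXiv:1604.02170 — 5 statements merged into one kernel-verified Lean document; each statement's English description precedes it below -/
import Mathlib

section
/- For any nonempty compact metric spaces X and Y there exists an optimal correspondence between them, i.e. a correspondence R ⊆ X × Y with d_GH(X,Y) = (1/2)·dis R. -/
/-- A relation `σ ⊆ X × Y` is a correspondence if both canonical projections
of `σ` to `X` and to `Y` are surjective. -/
def IsCorrespondence {X Y : Type*} (σ : Set (X × Y)) : Prop :=
  (∀ x : X, ∃ y : Y, (x, y) ∈ σ) ∧ (∀ y : Y, ∃ x : X, (x, y) ∈ σ)

/-- The distortion of a relation `σ ⊆ X × Y` between metric spaces: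
`dis σ = sup{ ||xx'| − |yy'|| : (x,y), (x',y') ∈ σ }`. -/
noncomputable def dis {X Y : Type*} [MetricSpace X] [MetricSpace Y] (σ : Set (X × Y)) : ℝ :=
  sSup {d : ℝ | ∃ p ∈ σ, ∃ q ∈ σ, d = |dist p.1 q.1 - dist p.2 q.2|}


/-!
Embed `X` and `Y` isometrically into a common space `Z` so that the Hausdorff distance of the
images is `d_GH(X, Y)` (Mathlib's optimal coupling), and relate `x` to `y` when their images are
within `d_GH(X, Y)` of each other. Compactness of the images makes this a correspondence, and the
triangle inequality in `Z` bounds its distortion by `2 d_GH(X, Y)`. Conversely, any correspondence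
`R` gives `d_GH(X, Y) ≤ dis R / 2`: glue `X` and `Y` by declaring related points at distance
`ε > dis R / 2`, which is a metric on `X ⊕ Y` in which the two copies are `ε`-close.
-/

open Metric Set GromovHausdorff

section

variable {X Y : Type*}

theorem IsCorrespondence.nonempty [Nonempty X] {R : Set (X × Y)} (hR : IsCorrespondence R) :
    R.Nonempty :=
  let x : X := Classical.arbitrary X
  let ⟨y, hy⟩ := hR.1 x
  ⟨(x, y), hy⟩

section Distortion

variable [MetricSpace X] [MetricSpace Y] {σ : Set (X × Y)} {c : ℝ}

theorem dis_le_of_forall_le (hσ : σ.Nonempty)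
    (hc : ∀ p ∈ σ, ∀ q ∈ σ, |dist p.1 q.1 - dist p.2 q.2| ≤ c) : dis σ ≤ c := by
  obtain ⟨p, hp⟩ := hσ
  refine csSup_le ⟨_, p, hp, p, hp, rfl⟩ ?_
  rintro _ ⟨p, hp, q, hq, rfl⟩
  exact hc p hp q hq

theorem abs_dist_sub_dist_le_dis (hc : ∀ p ∈ σ, ∀ q ∈ σ, |dist p.1 q.1 - dist p.2 q.2| ≤ c)
    {p q : X × Y} (hp : p ∈ σ) (hq : q ∈ σ) : |dist p.1 q.1 - dist p.2 q.2| ≤ dis σ := by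
  refine le_csSup ⟨c, ?_⟩ ⟨p, hp, q, hq, rfl⟩
  rintro _ ⟨p, hp, q, hq, rfl⟩
  exact hc p hp q hq

theorem dis_nonneg (hσ : σ.Nonempty)
    (hc : ∀ p ∈ σ, ∀ q ∈ σ, |dist p.1 q.1 - dist p.2 q.2| ≤ c) : 0 ≤ dis σ := by
  obtain ⟨p, hp⟩ := hσ
  simpa using abs_dist_sub_dist_le_dis hc hp hp

end Distortion

section Gluing

variable [MetricSpace X] [MetricSpace Y] [CompactSpace X] [CompactSpace Y] [Nonempty X]
  [Nonempty Y] {R : Set (X × Y)}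

theorem ghDist_le_of_isCorrespondence {ε : ℝ} (hR : IsCorrespondence R) (hε : 0 < ε)
    (hRε : ∀ p ∈ R, ∀ q ∈ R, |dist p.1 q.1 - dist p.2 q.2| ≤ 2 * ε) : ghDist X Y ≤ ε := by
  have : Nonempty R := hR.nonempty.to_subtype
  let : MetricSpace (X ⊕ Y) :=
    glueMetricApprox (fun p : R => p.1.1) (fun p : R => p.1.2) ε hε
      fun p q => hRε p p.2 q q.2
  have hglued : ∀ p ∈ R, dist (Sum.inl p.1 : X ⊕ Y) (Sum.inr p.2) = ε := fun p hp =>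
    glueDist_glued_points (fun p : R => p.1.1) (fun p : R => p.1.2) ε ⟨p, hp⟩
  calc ghDist X Y ≤ hausdorffDist (range (Sum.inl : X → X ⊕ Y)) (range Sum.inr) :=
        ghDist_le_hausdorffDist (Isometry.of_dist_eq fun _ _ => rfl)
          (Isometry.of_dist_eq fun _ _ => rfl)
    _ ≤ ε := by
      refine hausdorffDist_le_of_mem_dist hε.le ?_ ?_
      · rintro _ ⟨x, rfl⟩
        obtain ⟨y, hy⟩ := hR.1 x
        exact ⟨Sum.inr y, mem_range_self y, (hglued (x, y) hy).le⟩
      · rintro _ ⟨y, rfl⟩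
        obtain ⟨x, hx⟩ := hR.2 y
        exact ⟨Sum.inl x, mem_range_self x, (dist_comm _ _).trans_le (hglued (x, y) hx).le⟩

theorem ghDist_le_half_dis {c : ℝ} (hR : IsCorrespondence R)
    (hc : ∀ p ∈ R, ∀ q ∈ R, |dist p.1 q.1 - dist p.2 q.2| ≤ c) : ghDist X Y ≤ dis R / 2 := by
  have hdis := dis_nonneg hR.nonempty hc
  refine le_of_forall_gt_imp_ge_of_dense fun ε hε =>
    ghDist_le_of_isCorrespondence hR (by linarith) fun p hp q hq => ?_
  linarith [abs_dist_sub_dist_le_dis hc hp hq]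

end Gluing

section Proximity

variable {Z : Type*} [MetricSpace Z] {f : X → Z} {g : Y → Z} {r : ℝ}

def proximityRel (f : X → Z) (g : Y → Z) (r : ℝ) : Set (X × Y) :=
  {p | dist (f p.1) (g p.2) ≤ r}

theorem abs_dist_sub_dist_le_of_mem_proximityRel [MetricSpace X] [MetricSpace Y]
    (hf : Isometry f) (hg : Isometry g)
    {p q : X × Y} (hp : p ∈ proximityRel f g r) (hq : q ∈ proximityRel f g r) :
    |dist p.1 q.1 - dist p.2 q.2| ≤ 2 * r := by
  have := dist_dist_dist_le (f p.1) (f q.1) (g p.2) (g q.2)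
  rw [Real.dist_eq, hf.dist_eq, hg.dist_eq] at this
  linarith [show dist (f p.1) (g p.2) ≤ r from hp, show dist (f q.1) (g q.2) ≤ r from hq]

theorem exists_dist_le_hausdorffDist {s t : Set Z} (ht : IsCompact t) (hne : t.Nonempty)
    (hfin : hausdorffEDist s t ≠ ⊤) {z : Z} (hz : z ∈ s) :
    ∃ w ∈ t, dist z w ≤ hausdorffDist s t := by
  obtain ⟨w, hw, hdist⟩ := ht.exists_infDist_eq_dist hne z
  exact ⟨w, hw, hdist ▸ infDist_le_hausdorffDist_of_mem hz hfin⟩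

theorem isCorrespondence_proximityRel [Nonempty X] [Nonempty Y]
    (hf : IsCompact (range f)) (hg : IsCompact (range g))
    (hr : hausdorffDist (range f) (range g) ≤ r) : IsCorrespondence (proximityRel f g r) := by
  have hfin : hausdorffEDist (range f) (range g) ≠ ⊤ :=
    hausdorffEDist_ne_top_of_nonempty_of_bounded (range_nonempty f) (range_nonempty g)
      hf.isBounded hg.isBounded
  constructor
  · intro x
    obtain ⟨_, ⟨y, rfl⟩, hy⟩ :=
      exists_dist_le_hausdorffDist hg (range_nonempty g) hfin (mem_range_self x)
    exact ⟨y, hy.trans hr⟩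
  · intro y
    rw [hausdorffEDist_comm] at hfin
    obtain ⟨_, ⟨x, rfl⟩, hx⟩ :=
      exists_dist_le_hausdorffDist hf (range_nonempty f) hfin (mem_range_self y)
    exact ⟨x, (dist_comm _ _).trans_le (hx.trans (hausdorffDist_comm.trans_le hr))⟩

end Proximity

end

/-- For any nonempty compact metric spaces `X` and `Y` there exists an optimal
correspondence, i.e. a correspondence `R ⊆ X × Y` with `d_GH(X,Y) = (1/2)·dis R`. -/
theorem exists_optimal_correspondence
    (X Y : Type*) [MetricSpace X] [MetricSpace Y]
    [CompactSpace X] [CompactSpace Y] [Nonempty X] [Nonempty Y] :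
    ∃ R : Set (X × Y), IsCorrespondence R ∧
      GromovHausdorff.ghDist X Y = (1 / 2) * dis R := by
  have hf := isometry_optimalGHInjl X Y
  have hg := isometry_optimalGHInjr X Y
  set R := proximityRel (optimalGHInjl X Y) (optimalGHInjr X Y) (ghDist X Y)
  have hR : IsCorrespondence R :=
    isCorrespondence_proximityRel (isCompact_range hf.continuous) (isCompact_range hg.continuous)
      hausdorffDist_optimal.le
  have hbound : ∀ p ∈ R, ∀ q ∈ R, |dist p.1 q.1 - dist p.2 q.2| ≤ 2 * ghDist X Y :=
    fun _ hp _ hq => abs_dist_sub_dist_le_of_mem_proximityRel hf hg hp hq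
  refine ⟨R, hR, ?_⟩
  linarith [ghDist_le_half_dis hR hbound, dis_le_of_forall_le hR.nonempty hbound]
end

section
/- For every natural number n ≥ 1 and every real number d ≥ 0, the set 𝓜_n(d) of all (isometry classes of) compact metric spaces having at most n points and diameter at most d is a compact subset of the Gromov–Hausdorff space 𝓜 of compact metric spaces with the Gromov–Hausdorff metric. -/
open GromovHausdorff Metric Set

private lemma diam_key {α : Type*} [MetricSpace α] {s t : Set α} (hs : s.Nonempty) (ht : t.Nonempty)
    (hsc : IsCompact s) (htc : IsCompact t) :
    diam s ≤ diam t + 2 * hausdorffDist s t := by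
  have fin : EMetric.hausdorffEdist s t ≠ ⊤ :=
    hausdorffEdist_ne_top_of_nonempty_of_bounded hs ht hsc.isBounded htc.isBounded
  have h0 : 0 ≤ diam t + 2 * hausdorffDist s t := by
    have := hausdorffDist_nonneg (s := s) (t := t)
    have := diam_nonneg (s := t)
    linarith
  refine diam_le_of_forall_dist_le h0 fun x hx y hy => ?_
  obtain ⟨x', hx', hxd⟩ := htc.exists_infDist_eq_dist ht x
  obtain ⟨y', hy', hyd⟩ := htc.exists_infDist_eq_dist ht y
  have h1 : dist x x' ≤ hausdorffDist s t := by
    rw [← hxd]; exact infDist_le_hausdorffDist_of_mem hx fin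
  have h2 : dist y y' ≤ hausdorffDist s t := by
    rw [← hyd]; exact infDist_le_hausdorffDist_of_mem hy fin
  have h3 : dist x' y' ≤ diam t := dist_le_diam_of_mem htc.isBounded hx' hy'
  calc dist x y ≤ dist x x' + dist x' y' + dist y' y := dist_triangle4 x x' y' y
    _ ≤ hausdorffDist s t + diam t + hausdorffDist s t := by
        rw [dist_comm y' y]; linarith
    _ = diam t + 2 * hausdorffDist s t := by ring

private lemma diam_lipschitz (p q : GHSpace) :
    diam (univ : Set p.Rep) ≤ diam (univ : Set q.Rep) + 2 * dist p q := by
  obtain ⟨Φ, Ψ, hΦ, hΨ, h⟩ := ghDist_eq_hausdorffDist p.Rep q.Rep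
  rw [dist_ghDist, h, ← hΦ.diam_range, ← hΨ.diam_range]
  exact diam_key (range_nonempty _) (range_nonempty _)
    (isCompact_range hΦ.continuous) (isCompact_range hΨ.continuous)


private lemma exists_sep {X : Type*} [MetricSpace X] {m : ℕ} (hm : 2 ≤ m)
    (f : Fin m → X) (hf : Function.Injective f) :
    ∃ e > (0 : ℝ), ∀ i j : Fin m, i ≠ j → e ≤ dist (f i) (f j) := by
  classical
  set P : Finset (Fin m × Fin m) := Finset.univ.filter (fun ij => ij.1 ≠ ij.2) with hP
  have hPne : P.Nonempty := by
    refine ⟨(⟨0, by omega⟩, ⟨1, by omega⟩), ?_⟩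
    rw [hP, Finset.mem_filter]
    exact ⟨Finset.mem_univ _, by simp [Fin.ext_iff]⟩
  refine ⟨P.inf' hPne (fun ij => dist (f ij.1) (f ij.2)), ?_, ?_⟩
  · rw [gt_iff_lt, Finset.lt_inf'_iff]
    rintro ⟨i, j⟩ hij
    rw [hP, Finset.mem_filter] at hij
    exact dist_pos.2 fun h => hij.2 (hf h)
  · intro i j hij
    have hmem : (i, j) ∈ P := by
      rw [hP, Finset.mem_filter]; exact ⟨Finset.mem_univ _, hij⟩
    exact Finset.inf'_le (fun ij : Fin m × Fin m => dist (f ij.1) (f ij.2)) hmem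

set_option maxHeartbeats 1000000 in
/-- For every `n ≥ 1` and `d ≥ 0`, the subset `𝓜_n(d)` of the Gromov–Hausdorff space
consisting of all (isometry classes of) compact metric spaces with at most `n` points
and diameter at most `d` is compact. -/
theorem isCompact_ghSpace_card_le_diam_le (n : ℕ) (hn : 1 ≤ n) (d : ℝ) (hd : 0 ≤ d) :
    IsCompact {p : GromovHausdorff.GHSpace |
      (Finite p.Rep ∧ Nat.card p.Rep ≤ n) ∧
      Metric.diam (Set.univ : Set p.Rep) ≤ d} := by
  apply TotallyBounded.isCompact_of_isClosed
  · apply GromovHausdorff.totallyBounded (C := d) (u := fun k : ℕ => (1 : ℝ) / (k + 1))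
      (K := fun _ => n)
    · exact tendsto_one_div_add_atTop_nhds_zero_nat
    · exact fun p hp => hp.2
    · intro p hp k
      refine ⟨univ, ?_, fun x _ => mem_iUnion₂.2 ⟨x, mem_univ x, mem_ball_self (by positivity)⟩⟩
      haveI := hp.1.1
      haveI : Fintype p.Rep := Fintype.ofFinite _
      rw [Cardinal.mk_univ, Cardinal.mk_fintype]
      exact_mod_cast (Nat.card_eq_fintype_card (α := p.Rep) ▸ hp.1.2 :
        Fintype.card p.Rep ≤ n)
  · rw [← isOpen_compl_iff]
    rw [Metric.isOpen_iff]
    intro p hp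
    by_cases hdiam : diam (univ : Set p.Rep) ≤ d
    · -- then the cardinality condition fails
      have hcard : ¬(Finite p.Rep ∧ Nat.card p.Rep ≤ n) := by
        intro h; exact hp ⟨h, hdiam⟩
      -- get n+1 points with pairwise distances ≥ e > 0
      obtain ⟨f, hf⟩ : ∃ f : Fin (n + 1) → p.Rep, Function.Injective f := by
        by_cases hfin : Finite p.Rep
        · haveI := hfin
          haveI : Fintype p.Rep := Fintype.ofFinite _
          have : n < Fintype.card p.Rep := by
            by_contra hle
            exact hcard ⟨hfin, by rw [Nat.card_eq_fintype_card]; omega⟩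
          obtain ⟨g⟩ := Function.Embedding.nonempty_iff_card_le.2
            (by simpa using this : Fintype.card (Fin (n + 1)) ≤ Fintype.card p.Rep)
          exact ⟨g, g.injective⟩
        · haveI : Infinite p.Rep := not_finite_iff_infinite.1 hfin
          exact ⟨(Infinite.natEmbedding p.Rep) ∘ Fin.val, fun a b hab =>
            Fin.val_injective ((Infinite.natEmbedding p.Rep).injective hab)⟩
      obtain ⟨e, hepos, hle⟩ := exists_sep (by omega) f hf
      refine ⟨e / 4, by linarith, fun q hq hq' => ?_⟩
      obtain ⟨⟨hqfin, hqcard⟩, -⟩ := hq'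
      haveI := hqfin
      haveI : Fintype q.Rep := Fintype.ofFinite _
      -- realize the distance
      obtain ⟨Φ, Ψ, hΦ, hΨ, hGH⟩ := ghDist_eq_hausdorffDist p.Rep q.Rep
      have hqdist : hausdorffDist (range Φ) (range Ψ) < e / 4 := by
        rw [← hGH, ← dist_ghDist, ← dist_comm]
        exact mem_ball.1 hq
      have hΨc : IsCompact (range Ψ) := isCompact_range hΨ.continuous
      -- choose nearest points
      have hnear : ∀ i : Fin (n + 1), ∃ y : q.Rep, dist (Φ (f i)) (Ψ y) ≤ e / 4 := by
        intro i
        obtain ⟨y', hy', hyd⟩ := hΨc.exists_infDist_eq_dist (range_nonempty _) (Φ (f i))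
        obtain ⟨y, rfl⟩ := hy'
        refine ⟨y, ?_⟩
        rw [← hyd]
        refine le_trans (infDist_le_hausdorffDist_of_mem (mem_range_self _) ?_) hqdist.le
        exact hausdorffEdist_ne_top_of_nonempty_of_bounded (range_nonempty _) (range_nonempty _)
          (isCompact_range hΦ.continuous).isBounded hΨc.isBounded
      choose g hg using hnear
      have : Fintype.card q.Rep < Fintype.card (Fin (n + 1)) := by
        rw [Fintype.card_fin]
        rw [Nat.card_eq_fintype_card] at hqcard
        omega
      obtain ⟨i, j, hij, hgij⟩ := Fintype.exists_ne_map_eq_of_card_lt g this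
      have hle : e ≤ dist (f i) (f j) := hle i j hij
      have : dist (f i) (f j) ≤ e / 2 := by
        have := hΦ.dist_eq (f i) (f j)
        calc dist (f i) (f j) = dist (Φ (f i)) (Φ (f j)) := (hΦ.dist_eq _ _).symm
          _ ≤ dist (Φ (f i)) (Ψ (g i)) + dist (Ψ (g i)) (Φ (f j)) := dist_triangle _ _ _
          _ ≤ e / 4 + e / 4 := by
              refine add_le_add (hg i) ?_
              rw [hgij, dist_comm]
              exact hg j
          _ = e / 2 := by ring
      linarith
    · -- the diameter condition fails
      push_neg at hdiam
      refine ⟨(diam (univ : Set p.Rep) - d) / 2, by linarith, fun q hq hq' => ?_⟩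
      have h1 : diam (univ : Set p.Rep) ≤ diam (univ : Set q.Rep) + 2 * dist p q :=
        diam_lipschitz p q
      have h2 : diam (univ : Set q.Rep) ≤ d := hq'.2
      have h3 : dist p q < (diam (univ : Set p.Rep) - d) / 2 := by
        rw [← dist_comm]; exact mem_ball.1 hq
      linarith
end

section
/- Let X be a proper metric space (every closed bounded subset of X is compact). Then for every nonempty finite subset M ⊆ X there exists a connected graph G on X connecting M with |G| = smt(M,X); that is, SMT(M,X) ≠ ∅. -/
/-- A (simple) graph on a set `X`: a finite vertex set `verts ⊆ X` together with a finite
set of edges, each edge being a 2-element subset of `verts`. -/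
structure GraphOn (X : Type*) where
  verts : Finset X
  edges : Finset (Sym2 X)
  mem_verts_of_mem_edges : ∀ e ∈ edges, ∀ x ∈ e, x ∈ verts
  not_isDiag : ∀ e ∈ edges, ¬ e.IsDiag

/-- Two points are adjacent in `G` if they form an edge of `G`. -/
def GraphOn.Adj {X : Type*} (G : GraphOn X) (x y : X) : Prop := s(x, y) ∈ G.edges

/-- A graph on `X` is connected if its vertex set is nonempty and any two of its vertices
are joined by a path of edges. -/
def GraphOn.IsConnected {X : Type*} (G : GraphOn X) : Prop :=
  G.verts.Nonempty ∧ ∀ x ∈ G.verts, ∀ y ∈ G.verts, Relation.ReflTransGen G.Adj x y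

/-- A graph on `X` is acyclic if it contains no cycle, i.e. no injective circular sequence
of at least three vertices with consecutive members adjacent. -/
def GraphOn.IsAcyclic {X : Type*} (G : GraphOn X) : Prop :=
  ¬ ∃ (k : ℕ) (v : ZMod k → X), 3 ≤ k ∧ Function.Injective v ∧ ∀ i, G.Adj (v i) (v (i + 1))

/-- A tree on `X` is a connected acyclic graph on `X`. -/
def GraphOn.IsTree {X : Type*} (G : GraphOn X) : Prop := G.IsConnected ∧ G.IsAcyclic

/-- The length of a graph on a metric space: the sum of the lengths (distances between
endpoints) of all its edges. -/
noncomputable def GraphOn.length {X : Type*} [MetricSpace X] (G : GraphOn X) : ℝ :=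
  ∑ e ∈ G.edges, Sym2.lift ⟨fun x y => dist x y, fun _ _ => dist_comm _ _⟩ e

/-- A graph `G` on `X` connects a finite set `M ⊆ X` if `G` is connected and all points of `M`
are vertices of `G`. -/
def GraphOn.Connects {X : Type*} (G : GraphOn X) (M : Finset X) : Prop :=
  G.IsConnected ∧ ∀ m ∈ M, m ∈ G.verts

/-- The length of a Steiner minimal tree on a finite subset `M` of a metric space `X`:
the infimum of lengths of connected graphs on `X` connecting `M`. -/
noncomputable def smt (X : Type*) [MetricSpace X] (M : Finset X) : ℝ :=
  sInf {l : ℝ | ∃ G : GraphOn X, G.Connects M ∧ l = G.length}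

/-!
A near-optimal connected graph can be shrunk to one with at most `3 |M|` vertices without
getting longer: Steiner points of degree at most two are spliced out, redundant edges are
dropped, and in the resulting tree, whose Steiner points all have degree at least three, the
handshake lemma bounds the number of vertices. Such a graph lies within distance `smt + 1` of a
point of `M`, so it is the realization of one of finitely many abstract graphs on
`Fin (3 |M|)` with vertex positions in a compact set; here properness is used. The total edge
length is continuous in the positions, so it attains its infimum, which is `smt`.
-/

open Finset Relation

section symDist

variable {X : Type*} [PseudoMetricSpace X]

noncomputable def symDist : Sym2 X → ℝ :=
  Sym2.lift ⟨dist, dist_comm⟩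

@[simp]
theorem symDist_mk (x y : X) : symDist s(x, y) = dist x y := rfl

theorem symDist_nonneg (e : Sym2 X) : 0 ≤ symDist e :=
  e.ind fun _ _ => dist_nonneg

end symDist

theorem Finset.sum_insert_le_add {α : Type*} [DecidableEq α] {s : Finset α} {a : α} {f : α → ℝ}
    (ha : 0 ≤ f a) : ∑ x ∈ insert a s, f x ≤ f a + ∑ x ∈ s, f x := by
  by_cases h : a ∈ s
  · rw [insert_eq_of_mem h]
    linarith
  · rw [sum_insert h]

theorem Relation.ReflTransGen.sym2_map {α β : Type*} {E : Finset (Sym2 α)} {F : Finset (Sym2 β)}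
    (f : α → β) (hf : ∀ e ∈ E, e.map f ∈ F ∨ (e.map f).IsDiag) {a b : α}
    (h : ReflTransGen (fun x y => s(x, y) ∈ E) a b) :
    ReflTransGen (fun x y => s(x, y) ∈ F) (f a) (f b) :=
  h.lift' f fun x y hxy => by
    rcases hf _ hxy with hF | hdiag
    · exact .single hF
    · rw [Sym2.map_mk, Sym2.mk_isDiag_iff] at hdiag
      change ReflTransGen _ (f x) (f y)
      rw [hdiag]

theorem SimpleGraph.exists_adj_forall_adj_eq_or_eq {V : Type*} (H : SimpleGraph V) {v : V}
    [Fintype (H.neighborSet v)] (h0 : 0 < H.degree v) (h2 : H.degree v ≤ 2) :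
    ∃ a b, H.Adj v a ∧ H.Adj v b ∧ ∀ z, H.Adj v z → z = a ∨ z = b := by
  classical
  rw [← card_neighborFinset_eq_degree] at h0 h2
  obtain h | h : #(H.neighborFinset v) = 1 ∨ #(H.neighborFinset v) = 2 := by omega
  · obtain ⟨a, ha⟩ := card_eq_one.mp h
    have hadj : ∀ z, H.Adj v z ↔ z = a := fun z => by
      rw [← mem_neighborFinset, ha, mem_singleton]
    exact ⟨a, a, (hadj a).2 rfl, (hadj a).2 rfl, fun z hz => .inl ((hadj z).1 hz)⟩
  · obtain ⟨a, b, -, hab⟩ := card_eq_two.mp h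
    have hadj : ∀ z, H.Adj v z ↔ z = a ∨ z = b := fun z => by
      rw [← mem_neighborFinset, hab, mem_insert, mem_singleton]
    exact ⟨a, b, (hadj a).2 (.inl rfl), (hadj b).2 (.inr rfl), fun z hz => (hadj z).1 hz⟩

theorem SimpleGraph.card_le_three_mul_of_three_le_degree {V : Type*} [Fintype V] [DecidableEq V]
    (H : SimpleGraph V) [DecidableRel H.Adj] (S : Finset V)
    (hE : #H.edgeFinset + 1 ≤ Fintype.card V) (hdeg : ∀ v ∉ S, 3 ≤ H.degree v) :
    Fintype.card V ≤ 3 * #S := by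
  have hsum := H.sum_degrees_eq_twice_card_edges
  have hcompl : 3 * #Sᶜ ≤ ∑ v, H.degree v :=
    calc 3 * #Sᶜ = ∑ _v ∈ Sᶜ, 3 := by rw [sum_const, smul_eq_mul, mul_comm]
      _ ≤ ∑ v ∈ Sᶜ, H.degree v := sum_le_sum fun v hv => hdeg v (mem_compl.mp hv)
      _ ≤ ∑ v, H.degree v := sum_le_univ_sum_of_nonneg fun _ => Nat.zero_le _
  rw [card_compl] at hcompl
  omega

def IsConnectedEdgeSet {ι : Type*} (P : Finset (Sym2 ι)) : Prop :=
  ∀ i j, ReflTransGen (fun a b => s(a, b) ∈ P) i j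

section edgeSum

variable {ι X : Type*} [PseudoMetricSpace X]

noncomputable def edgeSum (σ : ι → X) (P : Finset (Sym2 ι)) : ℝ :=
  ∑ p ∈ P, symDist (p.map σ)

theorem continuous_edgeSum (P : Finset (Sym2 ι)) : Continuous fun σ : ι → X => edgeSum σ P :=
  continuous_finsetSum P fun p _ => p.ind fun i j => by
    simpa using (continuous_apply i).dist (continuous_apply j)

theorem IsCompact.exists_forall_edgeSum_le [Finite ι] {A : Set (ι → X)} (hA : IsCompact A)
    (hA₀ : A.Nonempty) {S : Set (Finset (Sym2 ι))} (hS : S.Nonempty) :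
    ∃ P ∈ S, ∃ σ ∈ A, ∀ P' ∈ S, ∀ σ' ∈ A, edgeSum σ P ≤ edgeSum σ' P' := by
  obtain ⟨P₀, hP₀⟩ := hS
  obtain ⟨σ₀, hσ₀⟩ := hA₀
  obtain ⟨t, ht, hmin⟩ := ((Set.toFinite S).isCompact_biUnion fun P _ =>
    hA.image (continuous_edgeSum P)).exists_isLeast
      ⟨_, Set.mem_biUnion hP₀ (Set.mem_image_of_mem _ hσ₀)⟩
  obtain ⟨P, hP, σ, hσ, rfl⟩ : ∃ P ∈ S, ∃ σ ∈ A, edgeSum σ P = t := by simpa using ht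
  exact ⟨P, hP, σ, hσ, fun P' hP' σ' hσ' =>
    hmin (Set.mem_biUnion hP' (Set.mem_image_of_mem _ hσ'))⟩

end edgeSum

theorem isCompact_setOf_subset_range {ι X : Type*} [Finite ι] [TopologicalSpace X] [T2Space X]
    {K : Set X} (hK : IsCompact K) (M : Finset X) :
    IsCompact {σ : ι → X | ↑M ⊆ Set.range σ ∧ ∀ i, σ i ∈ K} := by
  have hM : IsClosed {σ : ι → X | ↑M ⊆ Set.range σ} := by
    simp only [Set.subset_def, mem_coe, Set.mem_range, Set.ofPred_forall, Set.ofPred_exists]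
    exact isClosed_biInter fun m _ => isClosed_iUnion_of_finite fun i =>
      isClosed_eq (continuous_apply i) continuous_const
  have hK' : IsClosed {σ : ι → X | ∀ i, σ i ∈ K} := by
    simp only [Set.ofPred_forall]
    exact isClosed_iInter fun i => hK.isClosed.preimage (continuous_apply i)
  exact (isCompact_univ_pi fun _ => hK).of_isClosed_subset (hM.inter hK') fun σ hσ i _ => hσ.2 i

namespace GraphOn

section

variable {X : Type*} {G : GraphOn X} {x y : X}

theorem Adj.left_mem (h : G.Adj x y) : x ∈ G.verts :=
  G.mem_verts_of_mem_edges _ h x (Sym2.mem_mk_left x y)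

theorem Adj.right_mem (h : G.Adj x y) : y ∈ G.verts :=
  G.mem_verts_of_mem_edges _ h y (Sym2.mem_mk_right x y)

theorem Adj.ne (h : G.Adj x y) : x ≠ y :=
  fun hxy => G.not_isDiag _ h (Sym2.mk_isDiag_iff.mpr hxy)

theorem Adj.symm (h : G.Adj x y) : G.Adj y x := by
  rwa [GraphOn.Adj, Sym2.eq_swap]

section length

variable [MetricSpace X]

theorem length_eq (G : GraphOn X) : G.length = ∑ e ∈ G.edges, symDist e := rfl

theorem length_nonneg (G : GraphOn X) : 0 ≤ G.length :=
  sum_nonneg fun e _ => symDist_nonneg e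

theorem length_le_of_edges_subset {G H : GraphOn X} (h : G.edges ⊆ H.edges) : G.length ≤ H.length :=
  sum_le_sum_of_subset_of_nonneg h fun e _ _ => symDist_nonneg e

end length

def toSimpleGraph (G : GraphOn X) : SimpleGraph G.verts where
  Adj x y := G.Adj x y
  symm := ⟨fun _ _ => Adj.symm⟩
  loopless := ⟨fun _ h => h.ne rfl⟩

theorem mem_edgeSet_toSimpleGraph {e : Sym2 G.verts} :
    e ∈ G.toSimpleGraph.edgeSet ↔ e.map Subtype.val ∈ G.edges :=
  e.ind fun _ _ => SimpleGraph.mem_edgeSet _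

theorem card_edgeFinset_toSimpleGraph_le [Fintype G.toSimpleGraph.edgeSet] :
    #G.toSimpleGraph.edgeFinset ≤ #G.edges :=
  card_le_card_of_injOn (Sym2.map Subtype.val)
    (fun _ he => mem_edgeSet_toSimpleGraph.mp (SimpleGraph.mem_edgeFinset.mp he))
    (Sym2.map.injective Subtype.val_injective).injOn

theorem IsConnected.connected_toSimpleGraph (hG : G.IsConnected) : G.toSimpleGraph.Connected := by
  have hreach : ∀ {x y : X} (hx : x ∈ G.verts) (hy : y ∈ G.verts), ReflTransGen G.Adj x y →
      G.toSimpleGraph.Reachable ⟨x, hx⟩ ⟨y, hy⟩ := by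
    intro x y hx hy h
    induction h with
    | refl => rfl
    | tail _ hcd ih =>
      exact (ih hcd.left_mem).trans (SimpleGraph.Adj.reachable (G := G.toSimpleGraph) hcd)
  have : Nonempty G.verts := hG.1.coe_sort
  exact ⟨fun x y => hreach x.2 y.2 (hG.2 x x.2 y y.2)⟩

theorem dist_le_sum_edges [MetricSpace X] {x y : G.verts} (p : G.toSimpleGraph.Walk x y) :
    dist (x : X) y ≤ ((p.edges.map (Sym2.map Subtype.val)).map symDist).sum := by
  induction p with
  | nil => simp
  | @cons u v w _ p ih =>
    simp only [SimpleGraph.Walk.edges_cons, List.map_cons, List.sum_cons, Sym2.map_mk, symDist_mk]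
    linarith [dist_triangle (u : X) v w]

theorem IsConnected.dist_le_length [MetricSpace X] (hG : G.IsConnected) (hx : x ∈ G.verts)
    (hy : y ∈ G.verts) : dist x y ≤ G.length := by
  classical
  obtain ⟨p, hp⟩ := hG.connected_toSimpleGraph.preconnected.exists_isPath ⟨x, hx⟩ ⟨y, hy⟩
  set l := p.edges.map (Sym2.map Subtype.val)
  have hl : l.Nodup := hp.isTrail.edges_nodup.map (Sym2.map.injective Subtype.val_injective)
  have hlE : l.toFinset ⊆ G.edges := fun e he => by
    obtain ⟨e₀, he₀, rfl⟩ := List.mem_map.mp (List.mem_toFinset.mp he)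
    exact mem_edgeSet_toSimpleGraph.mp (p.edges_subset_edgeSet he₀)
  calc dist x y ≤ (l.map symDist).sum := dist_le_sum_edges p
    _ = ∑ e ∈ l.toFinset, symDist e := (List.sum_toFinset _ hl).symm
    _ ≤ G.length := sum_le_sum_of_subset_of_nonneg hlE fun e _ _ => symDist_nonneg e

theorem IsConnected.exists_spanningTree (hG : G.IsConnected) :
    ∃ T : GraphOn X, T.verts = G.verts ∧ T.edges ⊆ G.edges ∧ T.IsConnected ∧
      #T.edges + 1 = #T.verts := by
  classical
  obtain ⟨T, hTG, hT⟩ := hG.connected_toSimpleGraph.exists_isTree_le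
  let val₂ : Sym2 G.verts ↪ Sym2 X :=
    ⟨Sym2.map Subtype.val, Sym2.map.injective Subtype.val_injective⟩
  have hsub : T.edgeFinset.map val₂ ⊆ G.edges := fun e he => by
    obtain ⟨e₀, he₀, rfl⟩ := mem_map.mp he
    exact mem_edgeSet_toSimpleGraph.mp (SimpleGraph.edgeSet_mono hTG (T.mem_edgeFinset.mp he₀))
  refine ⟨⟨G.verts, T.edgeFinset.map val₂, fun e he => G.mem_verts_of_mem_edges e (hsub he),
    fun e he => G.not_isDiag e (hsub he)⟩, rfl, hsub, ⟨hG.1, fun x hx y hy => ?_⟩, ?_⟩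
  · have hxy := (SimpleGraph.reachable_iff_reflTransGen _ _).mp (hT.1.preconnected ⟨x, hx⟩ ⟨y, hy⟩)
    exact hxy.lift' Subtype.val fun a b (hab : T.Adj a b) =>
      .single (mem_map_of_mem val₂ (T.mem_edgeFinset.mpr (T.mem_edgeSet.mpr hab)))
  · simpa using hT.card_edgeFinset

end

section

variable {X : Type*} [DecidableEq X] {G : GraphOn X} {v u w : X}

-- For a leaf `v` one takes `w = u`; the diagonal `s(u, u)` is then filtered out again.
def splice (G : GraphOn X) (hu : G.Adj v u) (hw : G.Adj v w) : GraphOn X where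
  verts := G.verts.erase v
  edges := (insert s(u, w) (G.edges.filter (v ∉ ·))).filter (¬ ·.IsDiag)
  mem_verts_of_mem_edges e he x hx := by
    rcases mem_insert.mp (mem_filter.mp he).1 with rfl | he
    · rcases Sym2.mem_iff.mp hx with rfl | rfl
      · exact mem_erase.mpr ⟨hu.ne.symm, hu.right_mem⟩
      · exact mem_erase.mpr ⟨hw.ne.symm, hw.right_mem⟩
    · obtain ⟨he, hve⟩ := mem_filter.mp he
      exact mem_erase.mpr ⟨fun hxv => hve (hxv ▸ hx), G.mem_verts_of_mem_edges e he x hx⟩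
  not_isDiag _ he := (mem_filter.mp he).2

variable (hu : G.Adj v u) (hw : G.Adj v w)

theorem card_edges_splice_le : #(G.splice hu hw).edges ≤ #G.edges := by
  have hlt : #(G.edges.filter (v ∉ ·)) < #G.edges :=
    card_lt_card (filter_ssubset.mpr ⟨_, hu, not_not.mpr (Sym2.mem_mk_left v u)⟩)
  calc #(G.splice hu hw).edges ≤ #(insert s(u, w) (G.edges.filter (v ∉ ·))) := card_filter_le _ _
    _ ≤ #(G.edges.filter (v ∉ ·)) + 1 := card_insert_le _ _
    _ ≤ #G.edges := hlt

variable {hu hw}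

theorem IsConnected.splice (hG : G.IsConnected) (hnbr : ∀ z, G.Adj v z → z = u ∨ z = w) :
    (G.splice hu hw).IsConnected := by
  refine ⟨⟨u, mem_erase.mpr ⟨hu.ne.symm, hu.right_mem⟩⟩, fun x hx y hy => ?_⟩
  let φ : X → X := fun z => if z = v then u else z
  have hφ : ∀ e ∈ G.edges, e.map φ ∈ (G.splice hu hw).edges ∨ (e.map φ).IsDiag := by
    intro e he
    by_cases hve : v ∈ e
    · obtain ⟨z, rfl⟩ := Sym2.mem_iff_exists.mp hve
      have hφz : φ z = z := if_neg (show G.Adj v z from he).ne.symm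
      rw [Sym2.map_mk, hφz, show φ v = u from if_pos rfl]
      rcases hnbr z he with rfl | rfl
      · exact .inr (Sym2.mk_isDiag_iff.mpr rfl)
      · exact (em _).symm.imp_left fun h => mem_filter.mpr ⟨mem_insert_self _ _, h⟩
    · have hφe : e.map φ = e := by
        rw [Sym2.map_congr fun z hz => if_neg fun (hzv : z = v) => hve (hzv ▸ hz), Sym2.map_id', id]
      rw [hφe]
      exact .inl (mem_filter.mpr
        ⟨mem_insert_of_mem (mem_filter.mpr ⟨he, hve⟩), G.not_isDiag e he⟩)
  have hxy := (hG.2 x (mem_of_mem_erase hx) y (mem_of_mem_erase hy)).sym2_map φ hφ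
  rwa [show φ x = x from if_neg (ne_of_mem_erase hx),
    show φ y = y from if_neg (ne_of_mem_erase hy)] at hxy

theorem length_splice_le [MetricSpace X] (hnbr : ∀ z, G.Adj v z → z = u ∨ z = w) :
    (G.splice hu hw).length ≤ G.length := by
  set F := G.edges.filter (v ∉ ·)
  have hvuw : dist u w ≤ ∑ e ∈ G.edges.filter (v ∈ ·), symDist e := by
    rcases eq_or_ne u w with rfl | huw
    · simpa using sum_nonneg fun e _ => symDist_nonneg e
    have hsub : {s(v, u), s(v, w)} ⊆ G.edges.filter (v ∈ ·) := by
      simp [insert_subset_iff, show s(v, u) ∈ G.edges from hu, show s(v, w) ∈ G.edges from hw]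
    calc dist u w ≤ dist v u + dist v w := dist_triangle_left u w v
      _ = ∑ e ∈ {s(v, u), s(v, w)}, symDist e := by
        rw [sum_pair fun h => huw (Sym2.congr_right.mp h), symDist_mk, symDist_mk]
      _ ≤ _ := sum_le_sum_of_subset_of_nonneg hsub fun e _ _ => symDist_nonneg e
  calc (G.splice hu hw).length ≤ ∑ e ∈ insert s(u, w) F, symDist e :=
        sum_le_sum_of_subset_of_nonneg (filter_subset _ _) fun e _ _ => symDist_nonneg e
    _ ≤ dist u w + ∑ e ∈ F, symDist e := sum_insert_le_add (symDist_nonneg _)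
    _ ≤ G.length := by
      rw [length_eq, ← sum_filter_add_sum_filter_not G.edges (v ∈ ·)]
      linarith

end

section

variable {X : Type*} [MetricSpace X] {G : GraphOn X} {M : Finset X}

theorem Connects.exists_card_verts_le (hM : M.Nonempty) (hG : G.Connects M) :
    ∃ G' : GraphOn X, G'.Connects M ∧ G'.length ≤ G.length ∧ #G'.verts ≤ 3 * #M := by
  classical
  obtain ⟨G', ⟨hG'M, hlen⟩, hmin⟩ := (measure fun H : GraphOn X => #H.verts + #H.edges).wf.has_min
    {H | H.Connects M ∧ H.length ≤ G.length} ⟨G, hG, le_rfl⟩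
  replace hmin : ∀ H : GraphOn X, H.Connects M → H.length ≤ G'.length →
      #G'.verts + #G'.edges ≤ #H.verts + #H.edges :=
    fun H hH hl => not_lt.mp (hmin H ⟨hH, hl.trans hlen⟩)
  refine ⟨G', hG'M, hlen, ?_⟩
  have htree : #G'.edges + 1 ≤ #G'.verts := by
    obtain ⟨T, hTV, hTE, hT, hcard⟩ := hG'M.1.exists_spanningTree
    have := hmin T ⟨hT, hTV ▸ hG'M.2⟩ (length_le_of_edges_subset hTE)
    rw [hTV] at hcard this
    omega
  have hdeg : ∀ v : G'.verts, v.1 ∉ M → 3 ≤ G'.toSimpleGraph.degree v := by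
    intro v hvM
    by_contra! h2
    obtain ⟨m, hm⟩ := hM
    have h0 : 0 < G'.toSimpleGraph.degree v :=
      SimpleGraph.Reachable.degree_pos_left (v := ⟨m, hG'M.2 m hm⟩)
        (fun h => hvM (congrArg Subtype.val h ▸ hm))
        (hG'M.1.connected_toSimpleGraph.preconnected _ _)
    obtain ⟨u, w, hu, hw, hnbr⟩ :=
      G'.toSimpleGraph.exists_adj_forall_adj_eq_or_eq h0 (Nat.lt_succ_iff.mp h2)
    have hnbr' : ∀ z, G'.Adj v z → z = u ∨ z = w := fun z hz =>
      (hnbr ⟨z, hz.right_mem⟩ hz).imp (congrArg Subtype.val) (congrArg Subtype.val)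
    have hsplice := hmin (G'.splice hu hw)
      ⟨hG'M.1.splice hnbr', fun m hm => mem_erase.mpr ⟨fun h => hvM (h ▸ hm), hG'M.2 m hm⟩⟩
      (length_splice_le hnbr')
    have := card_edges_splice_le hu hw
    have : #(G'.splice hu hw).verts = #G'.verts - 1 := card_erase_of_mem v.2
    have := card_pos.mpr hG'M.1.1
    omega
  calc #G'.verts = Fintype.card G'.verts := (Fintype.card_coe _).symm
    _ ≤ 3 * #(univ.filter fun v : G'.verts => v.1 ∈ M) :=
      G'.toSimpleGraph.card_le_three_mul_of_three_le_degree _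
        (by rw [Fintype.card_coe]; exact card_edgeFinset_toSimpleGraph_le.trans_lt htree)
        fun v hv => hdeg v (by simpa using hv)
    _ ≤ 3 * #M := Nat.mul_le_mul_left 3 (card_le_card_of_injOn Subtype.val
        (fun v hv => (mem_filter.mp hv).2) Subtype.val_injective.injOn)

end

section

variable {ι X : Type*} [Fintype ι]

def realize [DecidableEq X] (σ : ι → X) (P : Finset (Sym2 ι)) : GraphOn X where
  verts := univ.image σ
  edges := (P.image (Sym2.map σ)).filter (¬ ·.IsDiag)
  mem_verts_of_mem_edges e he x hx := by
    obtain ⟨p, -, rfl⟩ := mem_image.mp (mem_filter.mp he).1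
    obtain ⟨i, -, rfl⟩ := Sym2.mem_map.mp hx
    exact mem_image_of_mem σ (mem_univ i)
  not_isDiag _ he := (mem_filter.mp he).2

variable [DecidableEq X] {σ : ι → X} {P : Finset (Sym2 ι)} {M : Finset X}

theorem realize_length_le [MetricSpace X] (σ : ι → X) (P : Finset (Sym2 ι)) :
    (realize σ P).length ≤ edgeSum σ P :=
  (sum_le_sum_of_subset_of_nonneg (filter_subset _ _) fun e _ _ => symDist_nonneg e).trans
    (sum_image_le_of_nonneg fun e _ => symDist_nonneg e)

theorem realize_connects (hP : IsConnectedEdgeSet P) (hσ : ↑M ⊆ Set.range σ)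
    (hM : M.Nonempty) : (realize σ P).Connects M := by
  have hconn : ∀ i j, ReflTransGen (realize σ P).Adj (σ i) (σ j) := fun i j =>
    (hP i j).sym2_map σ fun p hp =>
      (em _).symm.imp_left fun h => mem_filter.mpr ⟨mem_image_of_mem _ hp, h⟩
  obtain ⟨m, hm⟩ := hM
  obtain ⟨i₀, -⟩ := hσ hm
  refine ⟨⟨⟨σ i₀, mem_image_of_mem σ (mem_univ i₀)⟩, fun x hx y hy => ?_⟩, fun m hm => ?_⟩
  · obtain ⟨i, -, rfl⟩ := mem_image.mp hx
    obtain ⟨j, -, rfl⟩ := mem_image.mp hy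
    exact hconn i j
  · obtain ⟨i, rfl⟩ := hσ hm
    exact mem_image_of_mem σ (mem_univ i)

end

section

variable {X : Type*} [MetricSpace X] {G : GraphOn X}

/-- Index the vertices by a surjection `σ : ι → G.verts` with section `τ`; the edges
`s(i, τ (σ i))` have length zero and attach the surplus indices. -/
theorem IsConnected.exists_edgeSum_le_length {ι : Type*} [Fintype ι] (hG : G.IsConnected)
    (hcard : #G.verts ≤ Fintype.card ι) :
    ∃ (σ : ι → X) (P : Finset (Sym2 ι)), IsConnectedEdgeSet P ∧ Set.range σ = G.verts ∧
      edgeSum σ P ≤ G.length := by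
  classical
  obtain ⟨f⟩ :=
    Function.Embedding.nonempty_of_card_le (α := G.verts) (β := ι) (by simpa using hcard)
  have : Nonempty G.verts := hG.1.coe_sort
  have : Nonempty ι := ⟨f (Classical.arbitrary _)⟩
  set σ : ι → X := fun i => (Function.invFun f i : G.verts)
  have hσV : ∀ i, σ i ∈ G.verts := fun i => (Function.invFun f i).2
  have hσ : Set.range σ = G.verts := by
    refine Set.Subset.antisymm (Set.range_subset_iff.mpr hσV) fun x hx => ⟨f ⟨x, hx⟩, ?_⟩
    simp [σ, Function.leftInverse_invFun f.injective _]
  set τ := Function.invFun σ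
  have hστ : ∀ x ∈ G.verts, σ (τ x) = x := fun x hx =>
    Function.invFun_eq (hσ.symm ▸ hx : x ∈ Set.range σ)
  set P := G.edges.image (Sym2.map τ) ∪ univ.image fun i => s(i, τ (σ i))
  have hattach : ∀ i, s(i, τ (σ i)) ∈ P := fun i =>
    mem_union_right _ (mem_image_of_mem _ (mem_univ i))
  refine ⟨σ, P, fun i j => ?_, hσ, ?_⟩
  · have hij := (hG.2 (σ i) (hσV i) (σ j) (hσV j)).sym2_map
      (F := P) τ fun e he => .inl (mem_union_left _ (mem_image_of_mem _ he))
    refine (ReflTransGen.single (hattach i)).trans (hij.tail ?_)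
    rw [Sym2.eq_swap]
    exact hattach j
  · have hzero : ∀ p ∈ P, p ∉ G.edges.image (Sym2.map τ) → symDist (p.map σ) = 0 := by
      intro p hp hpA
      obtain ⟨i, -, rfl⟩ := mem_image.mp ((mem_union.mp hp).resolve_left hpA)
      simp [hστ _ (hσV i)]
    have hστe : ∀ e ∈ G.edges, (e.map τ).map σ = e := fun e he => by
      rw [Sym2.map_map, Sym2.map_congr (f := σ ∘ τ) (g := id)
        fun x hx => hστ x (G.mem_verts_of_mem_edges e he x hx), Sym2.map_id, id]
    calc edgeSum σ P = ∑ p ∈ G.edges.image (Sym2.map τ), symDist (p.map σ) :=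
          (sum_subset subset_union_left hzero).symm
      _ ≤ ∑ e ∈ G.edges, symDist ((e.map τ).map σ) :=
          sum_image_le_of_nonneg fun _ _ => symDist_nonneg _
      _ = G.length := by rw [length_eq]; exact sum_congr rfl fun e he => by rw [hστe e he]

theorem Connects.exists_configuration {M : Finset X} {m₀ : X} (hm₀ : m₀ ∈ M)
    (hG : G.Connects M) :
    ∃ (σ : Fin (3 * #M) → X) (P : Finset (Sym2 (Fin (3 * #M)))), IsConnectedEdgeSet P ∧
      ↑M ⊆ Set.range σ ∧ (∀ i, dist (σ i) m₀ ≤ G.length) ∧ edgeSum σ P ≤ G.length := by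
  obtain ⟨G', hG'M, hlen, hcard⟩ := hG.exists_card_verts_le ⟨m₀, hm₀⟩
  obtain ⟨σ, P, hP, hσ, hsum⟩ :=
    hG'M.1.exists_edgeSum_le_length (ι := Fin (3 * #M)) (by simpa using hcard)
  refine ⟨σ, P, hP, hσ ▸ hG'M.2, fun i => ?_, hsum.trans hlen⟩
  exact (hG'M.1.dist_le_length (mem_coe.mp (hσ ▸ Set.mem_range_self i)) (hG'M.2 m₀ hm₀)).trans hlen

end

end GraphOn

section smt

variable {X : Type*} [MetricSpace X] {M : Finset X}

theorem smt_le_length {G : GraphOn X} (hG : G.Connects M) : smt X M ≤ G.length :=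
  csInf_le ⟨0, fun _ ⟨H, _, hl⟩ => hl ▸ H.length_nonneg⟩ ⟨G, hG, rfl⟩

theorem exists_connects_length_lt (hM : M.Nonempty) {ε : ℝ} (hε : 0 < ε) :
    ∃ G : GraphOn X, G.Connects M ∧ G.length < smt X M + ε := by
  classical
  have hcomplete : (GraphOn.realize ((↑) : M → X) univ).Connects M :=
    GraphOn.realize_connects (fun _ _ => .single (mem_univ _)) (by simp) hM
  obtain ⟨_, ⟨G, hG, rfl⟩, hlt⟩ :=
    exists_lt_of_csInf_lt (s := {l | ∃ G : GraphOn X, G.Connects M ∧ l = G.length})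
      ⟨_, _, hcomplete, rfl⟩ (lt_add_of_pos_right (smt X M) hε)
  exact ⟨G, hG, hlt⟩

end smt

/-- In a proper metric space (every closed bounded subset is compact), every nonempty finite
subset `M` is connected by a Steiner minimal tree: there is a connected graph `G` on `X`
connecting `M` with `|G| = smt(M,X)`. -/
theorem SMT_nonempty_of_proper {X : Type*} [MetricSpace X]
    (hproper : ∀ A : Set X, IsClosed A → Bornology.IsBounded A → IsCompact A)
    (M : Finset X) (hM : M.Nonempty) :
    ∃ G : GraphOn X, G.Connects M ∧ G.length = smt X M := by
  classical
  obtain ⟨m₀, hm₀⟩ := hM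
  set K := Metric.closedBall m₀ (smt X M + 1)
  set A := {σ : Fin (3 * #M) → X | ↑M ⊆ Set.range σ ∧ ∀ i, σ i ∈ K}
  have hnear : ∀ ε, 0 < ε → ε ≤ 1 →
      ∃ P, IsConnectedEdgeSet P ∧ ∃ σ ∈ A, edgeSum σ P < smt X M + ε := by
    intro ε hε hε1
    obtain ⟨G, hG, hlt⟩ := exists_connects_length_lt ⟨m₀, hm₀⟩ hε
    obtain ⟨σ, P, hP, hMσ, hdist, hsum⟩ := hG.exists_configuration hm₀
    exact ⟨P, hP, σ, ⟨hMσ, fun i => Metric.mem_closedBall.mpr (by linarith [hdist i])⟩,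
      by linarith⟩
  obtain ⟨P₁, hP₁, σ₁, hσ₁, -⟩ := hnear 1 one_pos le_rfl
  have hA : IsCompact A := isCompact_setOf_subset_range
    (hproper K Metric.isClosed_closedBall Metric.isBounded_closedBall) M
  obtain ⟨P, hP, σ, ⟨hMσ, -⟩, hmin⟩ :=
    hA.exists_forall_edgeSum_le ⟨σ₁, hσ₁⟩ (S := {P | IsConnectedEdgeSet P}) ⟨P₁, hP₁⟩
  have hle : edgeSum σ P ≤ smt X M := le_of_forall_pos_lt_add fun ε hε => by
    obtain ⟨P', hP', σ', hσ', hlt⟩ := hnear (min ε 1) (lt_min hε one_pos) (min_le_right _ _)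
    linarith [hmin P' hP' σ' hσ', min_le_left ε 1]
  have hconn := GraphOn.realize_connects hP hMσ ⟨m₀, hm₀⟩
  exact ⟨_, hconn, le_antisymm ((GraphOn.realize_length_le σ P).trans hle) (smt_le_length hconn)⟩
end

section
/- Let M = {m_1, …, m_k} be a nonempty finite subset of the Gromov–Hausdorff space 𝓜, put r = smt(M,𝓜) and d = max_i diam m_i, and let G = (V,E) be a tree on 𝓜 connecting M with |G| ≤ r + 1. Then every vertex v ∈ V satisfies diam v ≤ 2r + d + 2, i.e. V ⊆ 𝓜(2r + d + 2). -/
/-!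
Along the path in `G` from a vertex `v` to a point `m ∈ M`, the triangle inequality gives
`d_GH(v, m) ≤ |G| ≤ r + 1`. Realizing `v` and `m` isometrically in a common space at Hausdorff
distance `d_GH(v, m)`, the copy of `v` lies in the closed `d_GH(v, m)`-thickening of the copy of
`m`, so `diam v ≤ diam m + 2 d_GH(v, m) ≤ d + 2r + 2`.
-/

open Metric GromovHausdorff

section EdgeDist

variable {X : Type*} [MetricSpace X]

noncomputable def edgeDist : Sym2 X → ℝ :=
  Sym2.lift ⟨fun x y => dist x y, fun _ _ => dist_comm _ _⟩

@[simp]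
lemma edgeDist_mk (x y : X) : edgeDist s(x, y) = dist x y := rfl

lemma edgeDist_nonneg (e : Sym2 X) : 0 ≤ edgeDist e := by
  induction e using Sym2.ind with
  | _ x y => exact dist_nonneg

lemma dist_le_sum_edgeDist {H : SimpleGraph X} {x y : X} (p : H.Walk x y) :
    dist x y ≤ (p.edges.map edgeDist).sum := by
  induction p with
  | nil => simp
  | @cons u v w _ q ih =>
    calc dist u w ≤ dist u v + dist v w := dist_triangle _ _ _
      _ ≤ dist u v + (q.edges.map edgeDist).sum := by gcongr
      _ = _ := by simp

end EdgeDist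

namespace GraphOn

variable {X : Type*}

lemma reachable_of_reflTransGen (G : GraphOn X) {x y : X}
    (h : Relation.ReflTransGen G.Adj x y) :
    (SimpleGraph.fromEdgeSet (G.edges : Set (Sym2 X))).Reachable x y := by
  refine (SimpleGraph.reachable_iff_reflTransGen x y).2 (Relation.ReflTransGen.mono ?_ _ _ h)
  intro a b hab
  refine ⟨hab, fun hab' => G.not_isDiag _ hab ?_⟩
  rw [hab', Sym2.mk_isDiag_iff]

lemma dist_le_length [MetricSpace X] (G : GraphOn X) {x y : X}
    (h : Relation.ReflTransGen G.Adj x y) : dist x y ≤ G.length := by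
  classical
  obtain ⟨w⟩ := G.reachable_of_reflTransGen h
  -- a path uses each edge at most once, so its length is a subsum of `G.length`
  set p := w.bypass
  have hsub : p.edges.toFinset ⊆ G.edges := by
    intro e he
    have := p.edges_subset_edgeSet (List.mem_toFinset.1 he)
    rw [SimpleGraph.edgeSet_fromEdgeSet] at this
    exact this.1
  calc dist x y ≤ (p.edges.map edgeDist).sum := dist_le_sum_edgeDist p
    _ = ∑ e ∈ p.edges.toFinset, edgeDist e :=
        (List.sum_toFinset _ w.bypass_isPath.isTrail.edges_nodup).symm
    _ ≤ ∑ e ∈ G.edges, edgeDist e :=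
        Finset.sum_le_sum_of_subset_of_nonneg hsub fun e _ _ => edgeDist_nonneg e
    _ = G.length := rfl

end GraphOn

lemma Metric.subset_cthickening_hausdorffDist {α : Type*} [PseudoMetricSpace α] {s t : Set α}
    (hfin : hausdorffEDist s t ≠ ⊤) : s ⊆ cthickening (hausdorffDist s t) t := fun _ hx =>
  mem_cthickening_iff.2 <| by
    rw [hausdorffDist, ENNReal.ofReal_toReal hfin]
    exact infEDist_le_hausdorffEDist_of_mem hx

lemma Metric.diam_le_diam_add_two_mul_hausdorffDist {α : Type*} [PseudoMetricSpace α]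
    {s t : Set α} (ht : Bornology.IsBounded t) (hfin : hausdorffEDist s t ≠ ⊤) :
    diam s ≤ diam t + 2 * hausdorffDist s t :=
  (diam_mono (subset_cthickening_hausdorffDist hfin) ht.cthickening).trans
    (diam_cthickening_le t hausdorffDist_nonneg)

lemma GromovHausdorff.diam_rep_le (p q : GHSpace) :
    diam (Set.univ : Set p.Rep) ≤ diam (Set.univ : Set q.Rep) + 2 * dist p q := by
  obtain ⟨Φ, Ψ, hΦ, hΨ, hdist⟩ := ghDist_eq_hausdorffDist p.Rep q.Rep
  have hΦb := (isCompact_range hΦ.continuous).isBounded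
  have hΨb := (isCompact_range hΨ.continuous).isBounded
  rw [dist_ghDist, hdist, ← hΦ.diam_range, ← hΨ.diam_range]
  exact diam_le_diam_add_two_mul_hausdorffDist hΨb
    (hausdorffEDist_ne_top_of_nonempty_of_bounded (Set.range_nonempty _)
      (Set.range_nonempty _) hΦb hΨb)

theorem diam_vertices_le_general (M : Finset GromovHausdorff.GHSpace) (hM : M.Nonempty)
    (r d : ℝ)
    (hd : d = M.sup' hM fun m => Metric.diam (Set.univ : Set m.Rep))
    (G : GraphOn GromovHausdorff.GHSpace)
    (hconn : G.Connects M)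
    (hlen : G.length ≤ r + 1) :
    ∀ v ∈ G.verts, Metric.diam (Set.univ : Set v.Rep) ≤ 2 * r + d + 2 := by
  intro v hv
  obtain ⟨m, hm⟩ := hM
  have hdist : dist v m ≤ r + 1 :=
    (G.dist_le_length (hconn.1.2 v hv m (hconn.2 m hm))).trans hlen
  have hdm : diam (Set.univ : Set m.Rep) ≤ d :=
    hd ▸ Finset.le_sup' (fun m => diam (Set.univ : Set m.Rep)) hm
  linarith [diam_rep_le v m]

/-- Let `M` be a nonempty finite subset of the Gromov–Hausdorff space `𝓜`,
`r = smt(M,𝓜)`, `d = max_{m ∈ M} diam m`, and let `G` be a tree on `𝓜` connecting `M`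
with `|G| ≤ r + 1`. Then every vertex `v` of `G` satisfies `diam v ≤ 2r + d + 2`. -/
theorem diam_vertices_le (M : Finset GromovHausdorff.GHSpace) (hM : M.Nonempty)
    (r d : ℝ)
    (hr : r = smt GromovHausdorff.GHSpace M)
    (hd : d = M.sup' hM fun m => Metric.diam (Set.univ : Set m.Rep))
    (G : GraphOn GromovHausdorff.GHSpace)
    (htree : G.IsTree) (hconn : G.Connects M)
    (hlen : G.length ≤ r + 1) :
    ∀ v ∈ G.verts, Metric.diam (Set.univ : Set v.Rep) ≤ 2 * r + d + 2 :=
  diam_vertices_le_general M hM r d hd G hconn hlen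
end

section
/- Let M be a nonempty finite subset of 𝓜_n and let G = (V,E) be a tree on 𝓜 connecting M with |G| ≤ smt(M,𝓜) + 1. For each edge e = vw ∈ E fix an optimal correspondence R_e ∈ 𝓡_opt(v,w), and for each vertex v ∈ V let v' ⊆ v be the set of all points of v that lie on some thread emitted from a point of the disjoint union m = ⊔_{u ∈ M} u. Let G' = (V',E') be the graph with V' = {v' : v ∈ V} and v'w' ∈ E' iff vw ∈ E. Then: for each edge e = vw ∈ E the restriction R_e|_{v'×w'} is a correspondence between v' and w' with dis(R_e|_{v'×w'}) ≤ dis R_e; consequently d_GH(v',w') ≤ d_GH(v,w) for each edge, |G'| ≤ |G|, G' connects M, |G'| ≤ smt(M,𝓜) + 1, and every vertex v' of G' has at most N points, where N is the total number of points of m. -/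
open GromovHausdorff

/-- Given a family of threads `p` (one thread emitted from each point `x` of each boundary
space `u ∈ M`), `threadSet M p v = v'` is the set of all points of the space `v` lying on
some of these threads. -/
def threadSet (M : Finset GHSpace)
    (p : ∀ u ∈ M, u.Rep → ∀ v : GHSpace, v.Rep) (v : GHSpace) : Set v.Rep :=
  {y : v.Rep | ∃ u, ∃ hu : u ∈ M, ∃ x : u.Rep, p u hu x v = y}


/-!
Each thread crosses the edge `vw` through a pair of `R_e`, so the thread points `v' × w'` already
carry a correspondence inside `R_e`; its distortion is at most `dis R_e`, whence
`d_GH(v', w') ≤ dis R_e / 2 = d_GH(v, w)` edge by edge, and summing bounds `|G'|`. Every point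
of `u ∈ M` emits its own thread, so `u' = u`, and `v'` is the image of the `N` points of `m`
under the threads.
-/

open Metric

section Distortion

variable {X Y : Type*}

def restrictRel (σ : Set (X × Y)) (s : Set X) (t : Set Y) : Set (s × t) :=
  {z | ((z.1 : X), (z.2 : Y)) ∈ σ}

lemma isCorrespondence_restrictRel_iff {σ : Set (X × Y)} {s : Set X} {t : Set Y} :
    IsCorrespondence (restrictRel σ s t) ↔
      (∀ a ∈ s, ∃ b ∈ t, (a, b) ∈ σ) ∧ (∀ b ∈ t, ∃ a ∈ s, (a, b) ∈ σ) := by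
  simp only [IsCorrespondence, restrictRel, Set.mem_ofPred_eq, Subtype.forall, Subtype.exists,
    exists_prop]

variable [MetricSpace X] [MetricSpace Y]

lemma dis_nonneg_s15 (σ : Set (X × Y)) : 0 ≤ dis σ :=
  Real.sSup_nonneg <| by
    rintro _ ⟨a, -, b, -, rfl⟩
    exact abs_nonneg _

lemma dis_le {σ : Set (X × Y)} {c : ℝ} (hc : 0 ≤ c)
    (h : ∀ a ∈ σ, ∀ b ∈ σ, |dist a.1 b.1 - dist a.2 b.2| ≤ c) : dis σ ≤ c :=
  Real.sSup_le (by rintro _ ⟨a, ha, b, hb, rfl⟩; exact h a ha b hb) hc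

lemma le_dis [BoundedSpace X] [BoundedSpace Y] {σ : Set (X × Y)} {a b : X × Y}
    (ha : a ∈ σ) (hb : b ∈ σ) : |dist a.1 b.1 - dist a.2 b.2| ≤ dis σ := by
  refine le_csSup ⟨diam (Set.univ : Set X) + diam (Set.univ : Set Y), ?_⟩ ⟨a, ha, b, hb, rfl⟩
  rintro _ ⟨a, -, b, -, rfl⟩
  have hX : dist a.1 b.1 ≤ diam (Set.univ : Set X) :=
    dist_le_diam_of_mem (Bornology.IsBounded.all _) trivial trivial
  have hY : dist a.2 b.2 ≤ diam (Set.univ : Set Y) :=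
    dist_le_diam_of_mem (Bornology.IsBounded.all _) trivial trivial
  rw [abs_le]
  constructor <;> linarith [dist_nonneg (x := a.1) (y := b.1), dist_nonneg (x := a.2) (y := b.2)]

lemma dis_mono [BoundedSpace X] [BoundedSpace Y] {σ τ : Set (X × Y)} (h : σ ⊆ τ) :
    dis σ ≤ dis τ :=
  dis_le (dis_nonneg_s15 τ) fun _ ha _ hb => le_dis (h ha) (h hb)

lemma dis_restrictRel_le [BoundedSpace X] [BoundedSpace Y] (σ : Set (X × Y)) (s : Set X)
    (t : Set Y) : dis (restrictRel σ s t) ≤ dis σ :=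
  dis_le (dis_nonneg_s15 σ) fun _ ha _ hb => le_dis (σ := σ) ha hb

/-- Glue `X` and `Y` along `σ` at height `dis σ / 2 + δ`: every pair of `σ` is then at that
distance, and since `σ` is a correspondence this bounds the Hausdorff distance of the copies. -/
lemma ghDist_le_half_dis_s15 [CompactSpace X] [Nonempty X] [CompactSpace Y] [Nonempty Y]
    {σ : Set (X × Y)} (hσ : IsCorrespondence σ) : ghDist X Y ≤ dis σ / 2 := by
  obtain ⟨y₀, hy₀⟩ := hσ.1 (Classical.arbitrary X)
  have : Nonempty σ := ⟨⟨_, hy₀⟩⟩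
  refine le_of_forall_pos_le_add fun δ hδ => ?_
  set ε := dis σ / 2 + δ with hε_def
  have hε : 0 < ε := by linarith [dis_nonneg_s15 σ]
  have hdis : ∀ z z' : σ, |dist (z : X × Y).1 (z' : X × Y).1 - dist (z : X × Y).2 (z' : X × Y).2|
      ≤ 2 * ε := fun z z' => (le_dis z.2 z'.2).trans (by linarith)
  let _ : MetricSpace (X ⊕ Y) :=
    glueMetricApprox (fun z : σ => (z : X × Y).1) (fun z : σ => (z : X × Y).2) ε hε hdis
  have hglued : ∀ z : σ, dist (Sum.inl (z : X × Y).1 : X ⊕ Y) (Sum.inr (z : X × Y).2) = ε :=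
    glueDist_glued_points (fun z : σ => (z : X × Y).1) (fun z : σ => (z : X × Y).2) ε
  have hHausdorff : hausdorffDist (Set.range (Sum.inl : X → X ⊕ Y))
      (Set.range (Sum.inr : Y → X ⊕ Y)) ≤ ε := by
    apply hausdorffDist_le_of_mem_dist hε.le
    · rintro _ ⟨x, rfl⟩
      obtain ⟨y, hy⟩ := hσ.1 x
      exact ⟨Sum.inr y, ⟨y, rfl⟩, (hglued ⟨(x, y), hy⟩).le⟩
    · rintro _ ⟨y, rfl⟩
      obtain ⟨x, hx⟩ := hσ.2 y
      exact ⟨Sum.inl x, ⟨x, rfl⟩, (dist_comm (Sum.inr y) (Sum.inl x) ▸ hglued ⟨(x, y), hx⟩).le⟩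
  have isom_inl : Isometry (Sum.inl : X → X ⊕ Y) := Isometry.of_dist_eq fun _ _ => rfl
  have isom_inr : Isometry (Sum.inr : Y → X ⊕ Y) := Isometry.of_dist_eq fun _ _ => rfl
  exact (ghDist_le_hausdorffDist isom_inl isom_inr).trans hHausdorff

end Distortion

lemma GraphOn.sum_dist_comp_le_length {X Y : Type*} [MetricSpace X] [MetricSpace Y]
    (G : GraphOn X) (f : X → Y) (hf : ∀ v w, G.Adj v w → dist (f v) (f w) ≤ dist v w) :
    ∑ e ∈ G.edges, Sym2.lift ⟨fun a b => dist (f a) (f b), fun _ _ => dist_comm _ _⟩ e ≤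
      G.length := by
  refine Finset.sum_le_sum fun e he => ?_
  induction e using Sym2.ind with
  | _ a b => exact hf a b he

lemma nonempty_isometryEquiv_toGHSpace_rep (X : Type*) [MetricSpace X] [CompactSpace X]
    [Nonempty X] : Nonempty (X ≃ᵢ (toGHSpace X).Rep) :=
  toGHSpace_eq_toGHSpace_iff_isometryEquiv.1 (GHSpace.toGHSpace_rep _).symm

lemma toGHSpace_eq_of_forall_mem {q : GHSpace} {s : Set q.Rep} [CompactSpace s] [Nonempty s]
    (h : ∀ x, x ∈ s) : toGHSpace s = q := by
  conv_rhs => rw [← q.toGHSpace_rep]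
  exact toGHSpace_eq_toGHSpace_iff_isometryEquiv.2
    ⟨{ toEquiv := Equiv.subtypeUnivEquiv h, isometry_toFun := isometry_subtype_coe }⟩

section Threads

variable {M : Finset GHSpace} {p : ∀ u ∈ M, u.Rep → ∀ v : GHSpace, v.Rep}

lemma threadSet_eq_range (v : GHSpace) :
    threadSet M p v = Set.range fun z : Σ u : M, (u : GHSpace).Rep => p z.1 z.1.2 z.2 v := by
  ext y
  constructor
  · rintro ⟨u, hu, x, rfl⟩
    exact ⟨⟨⟨u, hu⟩, x⟩, rfl⟩
  · rintro ⟨⟨⟨u, hu⟩, x⟩, rfl⟩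
    exact ⟨u, hu, x, rfl⟩

lemma threadSet_nonempty (hM : M.Nonempty) (v : GHSpace) : (threadSet M p v).Nonempty :=
  let ⟨u, hu⟩ := hM
  ⟨_, u, hu, Classical.arbitrary u.Rep, rfl⟩

lemma threadSet_finite (hfin : ∀ u ∈ M, Finite u.Rep) (v : GHSpace) :
    (threadSet M p v).Finite := by
  have : ∀ u : M, Finite (u : GHSpace).Rep := fun u => hfin u u.2
  rw [threadSet_eq_range]
  exact Set.finite_range _

lemma card_threadSet_le (hfin : ∀ u ∈ M, Finite u.Rep) (v : GHSpace) :
    Nat.card (threadSet M p v) ≤ ∑ u ∈ M, Nat.card u.Rep := by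
  have : ∀ u : M, Finite (u : GHSpace).Rep := fun u => hfin u u.2
  calc Nat.card (threadSet M p v)
      ≤ Nat.card (Σ u : M, (u : GHSpace).Rep) := by
        rw [threadSet_eq_range]
        exact Nat.card_le_card_of_surjective _ Set.rangeFactorization_surjective
    _ = ∑ u : M, Nat.card (u : GHSpace).Rep := Nat.card_sigma
    _ = ∑ u ∈ M, Nat.card u.Rep := Finset.sum_coe_sort M fun u => Nat.card u.Rep

lemma isCorrespondence_restrictRel_threadSet {v w : GHSpace} {σ : Set (v.Rep × w.Rep)}
    (hσ : ∀ u (hu : u ∈ M) (x : u.Rep), (p u hu x v, p u hu x w) ∈ σ) :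
    IsCorrespondence (restrictRel σ (threadSet M p v) (threadSet M p w)) :=
  isCorrespondence_restrictRel_iff.2
    ⟨by rintro _ ⟨u, hu, x, rfl⟩; exact ⟨_, ⟨u, hu, x, rfl⟩, hσ u hu x⟩,
     by rintro _ ⟨u, hu, x, rfl⟩; exact ⟨_, ⟨u, hu, x, rfl⟩, hσ u hu x⟩⟩

end Threads

theorem thread_restriction_lemma_general (n N : ℕ)
    (M : Finset GHSpace) (hM : M.Nonempty)
    (hfin : ∀ m ∈ M, Finite m.Rep ∧ Nat.card m.Rep ≤ n)
    (hN : N = ∑ m ∈ M, Nat.card m.Rep)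
    (G : GraphOn GHSpace)
    (hlen : G.length ≤ smt GHSpace M + 1)
    (R : ∀ v w : GHSpace, G.Adj v w → Set (v.Rep × w.Rep))
    (hRopt : ∀ v w (h : G.Adj v w), ghDist v.Rep w.Rep = (1 / 2) * dis (R v w h))
    (p : ∀ u ∈ M, u.Rep → ∀ v : GHSpace, v.Rep)
    (hp_emit : ∀ u (hu : u ∈ M) (x : u.Rep), p u hu x u = x)
    (hp_thread : ∀ u (hu : u ∈ M) (x : u.Rep) v w (h : G.Adj v w),
      (p u hu x v, p u hu x w) ∈ R v w h) :
    (∀ v w (h : G.Adj v w),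
      (∀ a ∈ threadSet M p v, ∃ b ∈ threadSet M p w, (a, b) ∈ R v w h) ∧
      (∀ b ∈ threadSet M p w, ∃ a ∈ threadSet M p v, (a, b) ∈ R v w h) ∧
      dis (R v w h ∩ (threadSet M p v) ×ˢ (threadSet M p w)) ≤ dis (R v w h)) ∧
    ∃ q : GHSpace → GHSpace,
      (∀ v ∈ G.verts, Nonempty ((threadSet M p v) ≃ᵢ (q v).Rep)) ∧
      (∀ v w (h : G.Adj v w), ghDist (q v).Rep (q w).Rep ≤ ghDist v.Rep w.Rep) ∧
      (∑ e ∈ G.edges,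
          Sym2.lift ⟨fun a b => dist (q a) (q b), fun _ _ => dist_comm _ _⟩ e) ≤ G.length ∧
      (∑ e ∈ G.edges,
          Sym2.lift ⟨fun a b => dist (q a) (q b), fun _ _ => dist_comm _ _⟩ e) ≤
        smt GHSpace M + 1 ∧
      (∀ u ∈ M, q u = u) ∧
      (∀ v ∈ G.verts, Finite (q v).Rep ∧ Nat.card (q v).Rep ≤ N) := by
  have hfinite : ∀ u ∈ M, Finite u.Rep := fun u hu => (hfin u hu).1
  have (v : GHSpace) : Nonempty (threadSet M p v) := (threadSet_nonempty hM v).to_subtype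
  have (v : GHSpace) : Finite (threadSet M p v) := (threadSet_finite hfinite v).to_subtype
  have hcorr (v w : GHSpace) (h : G.Adj v w) :
      IsCorrespondence (restrictRel (R v w h) (threadSet M p v) (threadSet M p w)) :=
    isCorrespondence_restrictRel_threadSet fun u hu x => hp_thread u hu x v w h
  have hgh (v w : GHSpace) (h : G.Adj v w) :
      dist (toGHSpace (threadSet M p v)) (toGHSpace (threadSet M p w)) ≤ dist v w := by
    change ghDist _ _ ≤ _
    rw [dist_ghDist, hRopt v w h]
    linarith [ghDist_le_half_dis_s15 (hcorr v w h), dis_restrictRel_le (R v w h) (threadSet M p v)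
      (threadSet M p w)]
  have hsum := G.sum_dist_comp_le_length (fun v => toGHSpace (threadSet M p v)) hgh
  refine ⟨fun v w h => ⟨(isCorrespondence_restrictRel_iff.1 (hcorr v w h)).1,
    (isCorrespondence_restrictRel_iff.1 (hcorr v w h)).2, dis_mono Set.inter_subset_left⟩,
    fun v => toGHSpace (threadSet M p v), fun v _ => nonempty_isometryEquiv_toGHSpace_rep _,
    fun v w h => ?_, hsum, hsum.trans hlen,
    fun u hu => toGHSpace_eq_of_forall_mem fun x => ⟨u, hu, x, hp_emit u hu x⟩, fun v _ => ?_⟩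
  · simpa only [dist_ghDist] using hgh v w h
  · obtain ⟨e⟩ := nonempty_isometryEquiv_toGHSpace_rep (threadSet M p v)
    exact ⟨.of_equiv _ e.toEquiv, hN ▸ Nat.card_congr e.toEquiv ▸ card_threadSet_le hfinite v⟩

/-- Let `M ⊆ 𝓜_n` be a nonempty finite set of (isometry classes of) finite metric spaces and
`G = (V,E)` a tree on `𝓜` connecting `M` with `|G| ≤ smt(M,𝓜) + 1`.  Fix an optimal
correspondence `R_e` for each edge `e = vw` of `G` and a thread emitted from each point `x`
of the disjoint union `m = ⊔_{u ∈ M} u`; for each vertex `v` let `v' ⊆ v` be the set of points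
of `v` lying on one of these threads.  Then for each edge `vw` the restriction
`R_e|_{v'×w'}` is a correspondence between `v'` and `w'` with `dis(R_e|_{v'×w'}) ≤ dis R_e`;
consequently (with `q v` denoting the isometry class of `v'`, so that `G' = (V',E')` is the
image of `G` under `v ↦ v' = q v`): `d_GH(v',w') ≤ d_GH(v,w)` for each edge, `|G'| ≤ |G|`,
`G'` connects `M` (indeed `u' = u` for every `u ∈ M`), `|G'| ≤ smt(M,𝓜) + 1`, and every
vertex `v'` of `G'` has at most `N` points, where `N` is the total number of points of `m`. -/
theorem thread_restriction_lemma (n N : ℕ)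
    (M : Finset GHSpace) (hM : M.Nonempty)
    (hfin : ∀ m ∈ M, Finite m.Rep ∧ Nat.card m.Rep ≤ n)
    (hN : N = ∑ m ∈ M, Nat.card m.Rep)
    (G : GraphOn GHSpace) (htree : G.IsTree) (hconn : G.Connects M)
    (hlen : G.length ≤ smt GHSpace M + 1)
    (R : ∀ v w : GHSpace, G.Adj v w → Set (v.Rep × w.Rep))
    (hRsymm : ∀ v w (h : G.Adj v w) (h' : G.Adj w v) (x : v.Rep) (y : w.Rep),
      (x, y) ∈ R v w h ↔ (y, x) ∈ R w v h')
    (hRcorr : ∀ v w (h : G.Adj v w), IsCorrespondence (R v w h))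
    (hRopt : ∀ v w (h : G.Adj v w), ghDist v.Rep w.Rep = (1 / 2) * dis (R v w h))
    (p : ∀ u ∈ M, u.Rep → ∀ v : GHSpace, v.Rep)
    (hp_emit : ∀ u (hu : u ∈ M) (x : u.Rep), p u hu x u = x)
    (hp_thread : ∀ u (hu : u ∈ M) (x : u.Rep) v w (h : G.Adj v w),
      (p u hu x v, p u hu x w) ∈ R v w h) :
    (∀ v w (h : G.Adj v w),
      (∀ a ∈ threadSet M p v, ∃ b ∈ threadSet M p w, (a, b) ∈ R v w h) ∧
      (∀ b ∈ threadSet M p w, ∃ a ∈ threadSet M p v, (a, b) ∈ R v w h) ∧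
      dis (R v w h ∩ (threadSet M p v) ×ˢ (threadSet M p w)) ≤ dis (R v w h)) ∧
    ∃ q : GHSpace → GHSpace,
      (∀ v ∈ G.verts, Nonempty ((threadSet M p v) ≃ᵢ (q v).Rep)) ∧
      (∀ v w (h : G.Adj v w), ghDist (q v).Rep (q w).Rep ≤ ghDist v.Rep w.Rep) ∧
      (∑ e ∈ G.edges,
          Sym2.lift ⟨fun a b => dist (q a) (q b), fun _ _ => dist_comm _ _⟩ e) ≤ G.length ∧
      (∑ e ∈ G.edges,
          Sym2.lift ⟨fun a b => dist (q a) (q b), fun _ _ => dist_comm _ _⟩ e) ≤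
        smt GHSpace M + 1 ∧
      (∀ u ∈ M, q u = u) ∧
      (∀ v ∈ G.verts, Finite (q v).Rep ∧ Nat.card (q v).Rep ≤ N) :=
  thread_restriction_lemma_general n N M hM hfin hN G hlen R hRopt p hp_emit hp_thread
end
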